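/- For every pointed uncertainty map M,s and every star-free EPDL formula φ, M,s ⊨ φ if and only if M,s ⊩ φ, where ⊩ denotes the context-dependent semantics with the empty context (M,s ⊩ φ iff M,s ⊩_ε φ). -/

import Mathlib

mutual
/-- Formulas of the star-free fragment EPDL⁻. -/
inductive SFForm (P A : Type) : Type
  | top : SFForm P A
  | atom : P → SFForm P A
  | neg : SFForm P A → SFForm P A
  | and : SFForm P A → SFForm P A → SFForm P A
  | box : SFProg P A → SFForm P A → SFForm P A
  | know : SFForm P A → SFForm P A
/-- Star-free programs. -/
inductive SFProg (P A : Type) : Type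
  | act : A → SFProg P A
  | test : SFForm P A → SFProg P A
  | seq : SFProg P A → SFProg P A → SFProg P A
  | choice : SFProg P A → SFProg P A → SFProg P A
end

/-- A step of a computation sequence: an action or a test. -/
inductive SFStep (P A : Type) : Type
  | act : A → SFStep P A
  | test : SFForm P A → SFStep P A

mutual
def sizeF {P A : Type} : SFForm P A → ℕ
  | .top => 1
  | .atom _ => 1
  | .neg φ => sizeF φ + 1
  | .and φ ψ => sizeF φ + sizeF ψ + 1
  | .box π φ => sizeP π + sizeF φ + 1
  | .know φ => sizeF φ + 1
def sizeP {P A : Type} : SFProg P A → ℕ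
  | .act _ => 1
  | .test φ => sizeF φ + 1
  | .seq π π' => sizeP π + sizeP π' + 1
  | .choice π π' => sizeP π + sizeP π' + 1
end

def sizeStep {P A : Type} : SFStep P A → ℕ
  | .act _ => 1
  | .test φ => sizeF φ + 1

def sizeW {P A : Type} (ω : List (SFStep P A)) : ℕ := (ω.map sizeStep).sum

/-- L(π): the set of computation sequences of π. -/
def Lang {P A : Type} : SFProg P A → Set (List (SFStep P A))
  | .act a => {[SFStep.act a]}
  | .test φ => {[SFStep.test φ]}
  | .seq π π' => {ω | ∃ u ∈ Lang π, ∃ v ∈ Lang π', ω = u ++ v}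
  | .choice π π' => Lang π ∪ Lang π'

/-- r(ω): the sequence of actions obtained by deleting all tests from ω. -/
def rActs {P A : Type} (ω : List (SFStep P A)) : List A :=
  ω.filterMap fun st => match st with | .act a => some a | .test _ => none

theorem lang_size {P A : Type} : ∀ (π : SFProg P A) (ω : List (SFStep P A)),
    ω ∈ Lang π → sizeW ω ≤ sizeP π
  | .act a, ω, hω => by
      simp only [Lang, Set.mem_singleton_iff] at hω
      subst hω
      simp [sizeW, sizeStep, sizeP]
  | .test φ, ω, hω => by
      simp only [Lang, Set.mem_singleton_iff] at hω
      subst hω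
      simp [sizeW, sizeStep, sizeP]
  | .seq π π', ω, hω => by
      simp only [Lang, Set.mem_setOf_eq] at hω
      obtain ⟨u, hu, v, hv, rfl⟩ := hω
      have h1 := lang_size π u hu
      have h2 := lang_size π' v hv
      simp only [sizeW, List.map_append, List.sum_append] at *
      simp only [sizeP]
      omega
  | .choice π π', ω, hω => by
      simp only [Lang, Set.mem_union] at hω
      rcases hω with h | h
      · have := lang_size π ω h; simp only [sizeP]; omega
      · have := lang_size π' ω h; simp only [sizeP]; omega

theorem sizeF_pos {P A : Type} (φ : SFForm P A) : 1 ≤ sizeF φ := by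
  cases φ <;> simp [sizeF]

theorem sizeP_pos {P A : Type} (π : SFProg P A) : 1 ≤ sizeP π := by
  cases π <;> simp [sizeP]

/-- A Kripke model with labelled relations. -/
structure Kripke (P A : Type) where
  S : Type
  R : A → S → S → Prop
  V : S → P → Prop

namespace Kripke
variable {P A : Type}
/-- U|^a -/
def img (N : Kripke P A) (a : A) (U : Set N.S) : Set N.S := {t | ∃ u ∈ U, N.R a u t}
/-- Iterated update U|^σ along a sequence of actions. -/
def updU (N : Kripke P A) : Set N.S → List A → Set N.S
  | U, [] => U
  | U, a :: σ => N.updU (N.img a U) σ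
end Kripke

mutual
/-- Standard semantics of EPDL⁻ at a pointed uncertainty map (over a fixed
Kripke model `N`, given by an uncertainty set and a state). -/
def sfSat {P A : Type} (N : Kripke P A) : Set N.S → N.S → SFForm P A → Prop
  | _, _, .top => True
  | _, s, .atom p => N.V s p
  | U, s, .neg φ => ¬ sfSat N U s φ
  | U, s, .and φ ψ => sfSat N U s φ ∧ sfSat N U s ψ
  | U, s, .box π φ => ∀ c : Set N.S × N.S, sfRel N π (U, s) c → sfSat N c.1 c.2 φ
  | U, _, .know φ => ∀ u ∈ U, sfSat N U u φ
/-- The relation ⟦π⟧ between pointed uncertainty maps. -/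
def sfRel {P A : Type} (N : Kripke P A) : SFProg P A → Set N.S × N.S → Set N.S × N.S → Prop
  | .act a, c, c' => c'.1 = N.img a c.1 ∧ N.R a c.2 c'.2
  | .test ψ, c, c' => c' = c ∧ sfSat N c.1 c.2 ψ
  | .seq π₁ π₂, c, c' => ∃ d, sfRel N π₁ c d ∧ sfRel N π₂ d c'
  | .choice π₁ π₂, c, c' => sfRel N π₁ c c' ∨ sfRel N π₂ c c'
end

mutual
/-- Context-dependent semantics M,s ⊩_σ φ: `U` is the initial uncertainty set of
the uncertainty map M, `σ` records the actions executed so far. -/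
def cSat {P A : Type} (N : Kripke P A) (U : Set N.S) : List A → N.S → SFForm P A → Prop
  | _, _, .top => True
  | _, s, .atom p => N.V s p
  | σ, s, .neg φ => ¬ cSat N U σ s φ
  | σ, s, .and φ ψ => cSat N U σ s φ ∧ cSat N U σ s ψ
  | σ, _, .know φ => ∀ v ∈ N.updU U σ, cSat N U σ v φ
  | σ, s, .box π φ => ∀ ω : List (SFStep P A), ω ∈ Lang π →
      ∀ t : N.S, cRel N U ω σ s t → cSat N U (σ ++ rActs ω) t φ
termination_by σ s φ => sizeF φ
decreasing_by
  · simp only [sizeF]; omega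
  · simp only [sizeF]; omega
  · simp only [sizeF]; omega
  · simp only [sizeF]; omega
  · have h1 := lang_size π ω (by assumption)
    have h2 := sizeF_pos φ
    simp only [sizeF]; omega
  · have h2 := sizeP_pos π
    simp only [sizeF]; omega

/-- The context-dependent relation s →_{ω_σ} t. -/
def cRel {P A : Type} (N : Kripke P A) (U : Set N.S) : List (SFStep P A) → List A → N.S → N.S → Prop
  | [], _, s, t => s = t
  | .act a :: ω, σ, s, t => ∃ s', N.R a s s' ∧ cRel N U ω (σ ++ [a]) s' t
  | .test φ :: ω, σ, s, t => cSat N U σ s φ ∧ cRel N U ω σ s t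
termination_by ω σ s t => sizeW ω
decreasing_by
  · simp only [sizeW, sizeStep, List.map_cons, List.sum_cons]; omega
  · simp only [sizeW, sizeStep, List.map_cons, List.sum_cons]; omega
  · simp only [sizeW, sizeStep, List.map_cons, List.sum_cons]; omega
end


/-!
The context σ records exactly the actions whose updates the standard semantics has applied
to the uncertainty set, so `M, s ⊩_σ φ` holds iff `M|^σ, s ⊨ φ`, by induction on the size of `φ`.
For `[π]φ`, the relation `⟦π⟧` is the union over `ω ∈ L(π)` of the step-by-step relations `⟦ω⟧`;
along `ω` the standard semantics updates the uncertainty set by exactly `r(ω)`, and `→_{ω_σ}`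
agrees with `⟦ω⟧` as soon as both semantics agree on the (smaller) tests occurring in `ω`.
-/

section

variable {P A : Type} (N : Kripke P A)

theorem Kripke.updU_append (σ τ : List A) (U : Set N.S) :
    N.updU U (σ ++ τ) = N.updU (N.updU U σ) τ := by
  induction σ generalizing U with
  | nil => rfl
  | cons a σ ih => exact ih (N.img a U)

theorem Kripke.updU_concat (σ : List A) (a : A) (U : Set N.S) :
    N.updU U (σ ++ [a]) = N.img a (N.updU U σ) :=
  N.updU_append σ [a] U

@[simp]
theorem rActs_nil : rActs ([] : List (SFStep P A)) = [] := rfl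

@[simp]
theorem rActs_cons_act (a : A) (ω : List (SFStep P A)) :
    rActs (.act a :: ω) = a :: rActs ω := rfl

@[simp]
theorem rActs_cons_test (ψ : SFForm P A) (ω : List (SFStep P A)) :
    rActs (.test ψ :: ω) = rActs ω := rfl

theorem sizeF_lt_of_test_mem_lang {π : SFProg P A} {ω : List (SFStep P A)} {ψ : SFForm P A}
    (hω : ω ∈ Lang π) (hψ : .test ψ ∈ ω) : sizeF ψ < sizeP π :=
  calc sizeF ψ < sizeStep (SFStep.test ψ : SFStep P A) := Nat.lt_succ_self _
    _ ≤ sizeW ω := List.le_sum_of_mem (List.mem_map_of_mem hψ)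
    _ ≤ sizeP π := lang_size π ω hω

/-- `⟦ω⟧` for a computation sequence `ω`. -/
def sfRelW : List (SFStep P A) → Set N.S × N.S → Set N.S × N.S → Prop
  | [], c, c' => c' = c
  | .act a :: ω, c, c' => ∃ d, sfRel N (.act a) c d ∧ sfRelW ω d c'
  | .test ψ :: ω, c, c' => sfSat N c.1 c.2 ψ ∧ sfRelW ω c c'

theorem sfRelW_append (u v : List (SFStep P A)) (c c' : Set N.S × N.S) :
    sfRelW N (u ++ v) c c' ↔ ∃ d, sfRelW N u c d ∧ sfRelW N v d c' := by
  induction u generalizing c with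
  | nil => simp [sfRelW]
  | cons st u ih =>
    cases st with
    | act a =>
      simp only [List.cons_append, sfRelW, ih]
      constructor
      · rintro ⟨d, hd, e, h₁, h₂⟩; exact ⟨e, ⟨d, hd, h₁⟩, h₂⟩
      · rintro ⟨e, ⟨d, hd, h₁⟩, h₂⟩; exact ⟨d, hd, e, h₁, h₂⟩
    | test ψ => simp only [List.cons_append, sfRelW, ih, and_assoc, exists_and_left]

theorem sfRel_iff_exists_lang (π : SFProg P A) (c c' : Set N.S × N.S) :
    sfRel N π c c' ↔ ∃ ω ∈ Lang π, sfRelW N ω c c' := by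
  match π with
  | .act a =>
    simp only [Lang, Set.mem_singleton_iff, exists_eq_left, sfRelW]
    exact ⟨fun h => ⟨c', h, rfl⟩, fun ⟨_, h, hc'⟩ => hc' ▸ h⟩
  | .test ψ =>
    simp only [sfRel, Lang, Set.mem_singleton_iff, exists_eq_left, sfRelW]
    exact and_comm
  | .seq π₁ π₂ =>
    simp only [sfRel, Lang, Set.mem_ofPred_eq, sfRel_iff_exists_lang π₁,
      sfRel_iff_exists_lang π₂]
    constructor
    · rintro ⟨d, ⟨u, hu, h₁⟩, v, hv, h₂⟩
      exact ⟨u ++ v, ⟨u, hu, v, hv, rfl⟩, (sfRelW_append N u v c c').2 ⟨d, h₁, h₂⟩⟩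
    · rintro ⟨_, ⟨u, hu, v, hv, rfl⟩, h⟩
      obtain ⟨d, h₁, h₂⟩ := (sfRelW_append N u v c c').1 h
      exact ⟨d, ⟨u, hu, h₁⟩, v, hv, h₂⟩
  | .choice π₁ π₂ =>
    simp only [sfRel, Lang, Set.mem_union, sfRel_iff_exists_lang π₁,
      sfRel_iff_exists_lang π₂, or_and_right, exists_or]

theorem sfRelW.fst_eq_updU {ω : List (SFStep P A)} {c c' : Set N.S × N.S}
    (h : sfRelW N ω c c') : c'.1 = N.updU c.1 (rActs ω) := by
  induction ω generalizing c with
  | nil => simp only [sfRelW] at h; simp [h, Kripke.updU]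
  | cons st ω ih =>
    cases st with
    | act a =>
      obtain ⟨d, ⟨hd, -⟩, h⟩ := h
      simpa [Kripke.updU, ← hd] using ih h
    | test ψ => simpa using ih h.2

theorem cRel_iff_sfRelW (U : Set N.S) {ω : List (SFStep P A)}
    (htests : ∀ ψ, .test ψ ∈ ω → ∀ σ s, cSat N U σ s ψ ↔ sfSat N (N.updU U σ) s ψ)
    (σ : List A) (s t : N.S) :
    cRel N U ω σ s t ↔ sfRelW N ω (N.updU U σ, s) (N.updU U (σ ++ rActs ω), t) := by
  induction ω generalizing σ s with
  | nil => simp [cRel, sfRelW, eq_comm]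
  | cons st ω ih =>
    cases st with
    | act a =>
      have ih := ih fun ψ hψ => htests ψ (List.mem_cons_of_mem _ hψ)
      simp only [cRel, sfRelW, sfRel, rActs_cons_act]
      constructor
      · rintro ⟨s', hs', h⟩
        refine ⟨(N.updU U (σ ++ [a]), s'), ⟨N.updU_concat σ a U, hs'⟩, ?_⟩
        simpa using (ih (σ ++ [a]) s').1 h
      · rintro ⟨⟨_, s'⟩, ⟨rfl, hs'⟩, h⟩
        refine ⟨s', hs', (ih (σ ++ [a]) s').2 ?_⟩
        simpa [N.updU_concat] using h
    | test ψ =>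
      simp only [cRel, sfRelW, rActs_cons_test]
      exact and_congr (htests ψ List.mem_cons_self σ s)
        (ih (fun ψ' hψ' => htests ψ' (List.mem_cons_of_mem _ hψ')) σ s)

theorem cSat_iff_sfSat_updU (U : Set N.S) :
    ∀ (φ : SFForm P A) (σ : List A) (s : N.S), cSat N U σ s φ ↔ sfSat N (N.updU U σ) s φ
  | .top, _, _ => by simp [cSat, sfSat]
  | .atom p, _, _ => by simp [cSat, sfSat]
  | .neg φ, σ, s => by
    simp only [cSat, sfSat]
    exact not_congr (cSat_iff_sfSat_updU U φ σ s)
  | .and φ ψ, σ, s => by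
    simp only [cSat, sfSat]
    exact and_congr (cSat_iff_sfSat_updU U φ σ s) (cSat_iff_sfSat_updU U ψ σ s)
  | .know φ, σ, _ => by
    simp only [cSat, sfSat]
    exact forall₂_congr fun v _ => cSat_iff_sfSat_updU U φ σ v
  | .box π φ, σ, s => by
    have hrel : ∀ ω ∈ Lang π, ∀ t, cRel N U ω σ s t ↔
        sfRelW N ω (N.updU U σ, s) (N.updU U (σ ++ rActs ω), t) := fun ω hω =>
      cRel_iff_sfRelW N U (fun ψ hψ => cSat_iff_sfSat_updU U ψ) σ s
    rw [cSat, sfSat]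
    constructor
    · rintro h ⟨V, t⟩ hc
      obtain ⟨ω, hω, hc⟩ := (sfRel_iff_exists_lang N π _ _).1 hc
      obtain rfl : V = N.updU U (σ ++ rActs ω) := by
        rw [N.updU_append]; exact hc.fst_eq_updU
      exact (cSat_iff_sfSat_updU U φ _ t).1 (h ω hω t ((hrel ω hω t).2 hc))
    · intro h ω hω t ht
      exact (cSat_iff_sfSat_updU U φ _ t).2
        (h (_, t) ((sfRel_iff_exists_lang N π _ _).2 ⟨ω, hω, (hrel ω hω t).1 ht⟩))
termination_by φ => sizeF φ
decreasing_by
  all_goals simp only [sizeF]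
  all_goals first
    | omega
    | have := sizeF_lt_of_test_mem_lang hω hψ; omega

end

/-- For every pointed uncertainty map M,s and every star-free EPDL
formula φ, M,s ⊨ φ iff M,s ⊩ φ, where ⊩ is the context-dependent semantics with
the empty context. -/
theorem standard_eq_context_pointed {P A : Type} [Countable P] [Countable A]
    (N : Kripke P A) (U : Set N.S) (hU : U.Nonempty) (s : N.S) (hs : s ∈ U)
    (φ : SFForm P A) :
    sfSat N U s φ ↔ cSat N U [] s φ :=
  (cSat_iff_sfSat_updU N U φ [] s).symm
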